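/- In the discounted Hedge setting, for every k with 1 ≤ k ≤ j−1, the per-step increase of the log-weight-sum satisfies ln(W_{k+1}/W_k) ≤ η·(1−α)^{j−1−k}·g_A^k + (η²/2)·(1−α)^{2(j−1−k)}. -/

import Mathlib

open Finset

/-!
Round `k` multiplies the weight of action `i` by `e^{c·g_i^k}` with `c = η(1-α)^{j-1-k}`, so
`W_{k+1}/W_k` is the moment generating function at `c` of the gain of an action drawn from
Hedge's distribution in round `k`, whose mean is `g_A^k`. Hoeffding's lemma for a variable with
values in `[-1,1]` bounds its logarithm by `c·g_A^k + c²/2`.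
-/

/-- Adjusted cumulative gain of action `i` at the start of round `k` (horizon `j`):
`Ĝ_i^k = Σ_{s=1}^{k-1} (1-α)^{j-1-s}·g_i^s`. -/
noncomputable def Ghat {N : ℕ} (α : ℝ) (j : ℕ) (g : Fin N → ℕ → ℝ)
    (i : Fin N) (k : ℕ) : ℝ :=
  ∑ s ∈ Finset.Icc 1 (k - 1), (1 - α) ^ (j - 1 - s) * g i s

/-- Hedge's gain in round `k`:
`g_A^k = (Σᵢ e^{η·Ĝ_i^k}·g_i^k) / (Σᵢ e^{η·Ĝ_i^k})`. -/
noncomputable def hedgeGain {N : ℕ} (α η : ℝ) (j : ℕ) (g : Fin N → ℕ → ℝ)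
    (k : ℕ) : ℝ :=
  (∑ i, Real.exp (η * Ghat α j g i k) * g i k) /
    ∑ i, Real.exp (η * Ghat α j g i k)

/-- Hedge's adjusted cumulative gain at the start of round `j`:
`Ĝ_A^j = Σ_{s=1}^{j-1} (1-α)^{j-1-s}·g_A^s`. -/
noncomputable def GhatA {N : ℕ} (α η : ℝ) (j : ℕ) (g : Fin N → ℕ → ℝ) : ℝ :=
  ∑ s ∈ Finset.Icc 1 (j - 1), (1 - α) ^ (j - 1 - s) * hedgeGain α η j g s

/-- The weight sum at the start of round `k`: `W_k = Σᵢ e^{η·Ĝ_i^k}`. -/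
noncomputable def Wsum {N : ℕ} (α η : ℝ) (j : ℕ) (g : Fin N → ℕ → ℝ) (k : ℕ) : ℝ :=
  ∑ i, Real.exp (η * Ghat α j g i k)

open ProbabilityTheory MeasureTheory Real

theorem log_sum_mul_exp_div_le {ι : Type*} [Fintype ι] {w x : ι → ℝ} {a b : ℝ}
    (hw : ∀ i, 0 ≤ w i) (hW : 0 < ∑ i, w i) (hx : ∀ i, x i ∈ Set.Icc a b) (t : ℝ) :
    log ((∑ i, w i * exp (t * x i)) / ∑ i, w i) ≤
      t * ((∑ i, w i * x i) / ∑ i, w i) + ((b - a) / 2) ^ 2 * t ^ 2 / 2 := by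
  let _ : MeasurableSpace ι := ⊤
  set W := ∑ i, w i
  set m := (∑ i, w i * x i) / W
  let p : PMF ι := PMF.ofFintype (fun i ↦ ENNReal.ofReal (w i / W)) (by
    rw [← ENNReal.ofReal_sum_of_nonneg fun i _ ↦ div_nonneg (hw i) hW.le, ← sum_div,
      div_self hW.ne', ENNReal.ofReal_one])
  have hp (f : ι → ℝ) : ∫ i, f i ∂p.toMeasure = ∑ i, w i / W * f i := by
    simp [PMF.integral_eq_sum, p, ENNReal.toReal_ofReal (div_nonneg (hw _) hW.le)]
  have hoeffding := (hasSubgaussianMGF_of_mem_Icc (μ := p.toMeasure) (X := x)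
    (measurable_of_countable x).aemeasurable (ae_of_all _ hx)).mgf_le t
  have hmean : ∑ i, w i / W * x i = m := by simp only [div_mul_eq_mul_div, ← sum_div, m]
  have hvar : ((‖b - a‖₊ / 2) ^ 2 : NNReal) = ((b - a) / 2 : ℝ) ^ 2 := by
    simp [div_pow, sq_abs]
  rw [mgf, hp, hp, hmean, hvar] at hoeffding
  have hS : 0 < (∑ i, w i * exp (t * x i)) / W := by
    obtain ⟨i, -, hi⟩ := exists_lt_of_sum_lt (by simpa using hW : ∑ _i : ι, (0 : ℝ) < W)
    exact div_pos (sum_pos' (fun i _ ↦ mul_nonneg (hw i) (exp_pos _).le)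
      ⟨i, mem_univ i, mul_pos hi (exp_pos _)⟩) hW
  have hcentre : (∑ i, w i * exp (t * x i)) / W / exp (t * m) =
      ∑ i, w i / W * exp (t * (x i - m)) := by
    simp only [mul_sub, exp_sub, sum_div]
    exact sum_congr rfl fun i _ ↦ by ring
  rw [log_le_iff_le_exp hS, exp_add, ← div_le_iff₀' (exp_pos _), hcentre]
  exact hoeffding

section DiscountedHedge

variable {N : ℕ} (α η : ℝ) (j : ℕ) (g : Fin N → ℕ → ℝ) {k : ℕ}

theorem Ghat_succ (i : Fin N) (hk : 1 ≤ k) :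
    Ghat α j g i (k + 1) = Ghat α j g i k + (1 - α) ^ (j - 1 - k) * g i k := by
  obtain ⟨k, rfl⟩ := Nat.exists_eq_add_of_le' hk
  simp [Ghat, sum_Icc_succ_top]

theorem Wsum_succ (hk : 1 ≤ k) :
    Wsum α η j g (k + 1) =
      ∑ i, exp (η * Ghat α j g i k) * exp (η * (1 - α) ^ (j - 1 - k) * g i k) := by
  simp only [Wsum, Ghat_succ α j g _ hk, ← exp_add]
  ring_nf

theorem Wsum_pos (hN : 0 < N) (k : ℕ) : 0 < Wsum α η j g k :=
  have : Nonempty (Fin N) := Fin.pos_iff_nonempty.mp hN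
  sum_pos (fun _ _ ↦ exp_pos _) univ_nonempty

end DiscountedHedge

theorem discountedHedge_log_weight_step
    (N : ℕ) (hN : 1 ≤ N)
    (α : ℝ)
    (η : ℝ)
    (j : ℕ)
    (g : Fin N → ℕ → ℝ)
    (hg : ∀ (i : Fin N) (k : ℕ), 1 ≤ k → k ≤ j - 1 → g i k ∈ Set.Icc (-1 : ℝ) 1)
    (k : ℕ) (hk1 : 1 ≤ k) (hk2 : k ≤ j - 1) :
    Real.log (Wsum α η j g (k + 1) / Wsum α η j g k) ≤
      η * (1 - α) ^ (j - 1 - k) * hedgeGain α η j g k +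
        (η ^ 2 / 2) * (1 - α) ^ (2 * (j - 1 - k)) := by
  rw [Wsum_succ α η j g hk1]
  refine (log_sum_mul_exp_div_le (w := fun i ↦ exp (η * Ghat α j g i k)) (x := fun i ↦ g i k)
    (fun _ ↦ (exp_pos _).le) (Wsum_pos α η j g hN k) (fun i ↦ hg i k hk1 hk2)
    (η * (1 - α) ^ (j - 1 - k))).trans_eq ?_
  rw [hedgeGain]
  ring
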